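/- arXiv:1811.11031 — 2 statements merged into one kernel-verified Lean document; each statement's English description precedes it below -/
import Mathlib

section
/- Fix an integer n ≥ 1 and real numbers y₁, …, yₙ all strictly positive. Then the skew-normal score function U(θ) = Σᵢ (φ(θyᵢ)/Φ(θyᵢ))·yᵢ satisfies U(θ) > 0 for all θ ∈ ℝ; consequently the log-likelihood ℓ(θ) = Σᵢ log(2·φ(yᵢ)·Φ(θ yᵢ)) is strictly increasing on ℝ, U has no zero, and the maximum likelihood estimate does not exist (is infinite). -/
/-!
Since `Φ` is the integral of the everywhere positive Gaussian density over `(-∞, x]`, it is positive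
and strictly increasing. Hence for positive observations every term `log (2 φ(yᵢ) Φ(θ yᵢ))` of the
log-likelihood strictly increases with `θ`, and every term of the score is positive. A strictly
increasing function on `ℝ` has no maximiser.
-/

open Real MeasureTheory Set

lemma standardGaussian_eq_gaussianPDFReal {φ : ℝ → ℝ}
    (hφ : ∀ x, φ x = (√(2 * π))⁻¹ * exp (-x ^ 2 / 2)) :
    φ = ProbabilityTheory.gaussianPDFReal 0 1 := by
  ext x
  simp [hφ, ProbabilityTheory.gaussianPDFReal]

section IntegralIic

variable {f : ℝ → ℝ}

lemma strictMono_integral_Iic (hf : Integrable f) (hpos : ∀ x, 0 < f x) :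
    StrictMono fun x => ∫ t in Iic x, f t := by
  intro a b hab
  have hsplit : ∫ t in Iic b, f t = (∫ t in Iic a, f t) + ∫ t in Ioc a b, f t := by
    rw [← Iic_union_Ioc_eq_Iic hab.le,
      setIntegral_union (Iic_disjoint_Ioc le_rfl) measurableSet_Ioc hf.integrableOn hf.integrableOn]
  have hmiddle : 0 < ∫ t in Ioc a b, f t := by
    rw [← intervalIntegral.integral_of_le hab.le]
    exact intervalIntegral.intervalIntegral_pos_of_pos hf.intervalIntegrable hpos hab
  simp only [hsplit]
  linarith

lemma integral_Iic_pos (hf : Integrable f) (hpos : ∀ x, 0 < f x) (x : ℝ) :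
    0 < ∫ t in Iic x, f t :=
  calc (0 : ℝ) ≤ ∫ t in Iic (x - 1), f t :=
        setIntegral_nonneg measurableSet_Iic fun t _ => (hpos t).le
    _ < ∫ t in Iic x, f t := strictMono_integral_Iic hf hpos (sub_one_lt x)

end IntegralIic

lemma strictMono_sum_log_mul {ι : Type*} [Fintype ι] [Nonempty ι] {F : ℝ → ℝ}
    (hF : StrictMono F) (hFpos : ∀ x, 0 < F x) {c y : ι → ℝ} (hc : ∀ i, 0 < c i)
    (hy : ∀ i, 0 < y i) :
    StrictMono fun θ => ∑ i, log (c i * F (θ * y i)) := by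
  intro a b hab
  refine Finset.sum_lt_sum_of_nonempty Finset.univ_nonempty fun i _ => ?_
  have hFab : F (a * y i) < F (b * y i) := hF (mul_lt_mul_of_pos_right hab (hy i))
  exact log_lt_log (mul_pos (hc i) (hFpos _)) (mul_lt_mul_of_pos_left hFab (hc i))

lemma StrictMono.not_exists_forall_apply_le {f : ℝ → ℝ} (hf : StrictMono f) :
    ¬∃ θ, ∀ θ', f θ' ≤ f θ :=
  fun ⟨θ, hθ⟩ => (lt_add_one θ).not_ge (hf.le_iff_le.1 (hθ (θ + 1)))

/-- If all observations `yᵢ` are strictly positive, the skew-normal score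
`U(θ) = Σᵢ (φ(θyᵢ)/Φ(θyᵢ)) yᵢ` is strictly positive everywhere; consequently the
log-likelihood `ℓ(θ) = Σᵢ log(2 φ(yᵢ) Φ(θ yᵢ))` is strictly increasing, `U` has no
zero, and the MLE does not exist (no finite maximizer). -/
theorem skewNormal_mle_infinite
    (n : ℕ) (hn : 1 ≤ n) (y : Fin n → ℝ) (hy : ∀ i, 0 < y i)
    (φ Φ : ℝ → ℝ)
    (hφ : ∀ x, φ x = (Real.sqrt (2 * π))⁻¹ * Real.exp (-x ^ 2 / 2))
    (hΦ : ∀ x, Φ x = ∫ t in Set.Iic x, φ t)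
    (ℓ U : ℝ → ℝ)
    (hℓ : ∀ θ, ℓ θ = ∑ i, Real.log (2 * φ (y i) * Φ (θ * y i)))
    (hU : ∀ θ, U θ = ∑ i, (φ (θ * y i) / Φ (θ * y i)) * y i) :
    (∀ θ, 0 < U θ) ∧ StrictMono ℓ ∧ (∀ θ, U θ ≠ 0) ∧
    ¬∃ θ : ℝ, ∀ θ' : ℝ, ℓ θ' ≤ ℓ θ := by
  have : Nonempty (Fin n) := Fin.pos_iff_nonempty.1 hn
  have hφint : Integrable φ := by
    rw [standardGaussian_eq_gaussianPDFReal hφ]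
    exact ProbabilityTheory.integrable_gaussianPDFReal 0 1
  have hφpos (x : ℝ) : 0 < φ x := by
    rw [standardGaussian_eq_gaussianPDFReal hφ]
    exact ProbabilityTheory.gaussianPDFReal_pos 0 1 x one_ne_zero
  have hΦ' : Φ = fun x => ∫ t in Iic x, φ t := funext hΦ
  have hΦpos (x : ℝ) : 0 < Φ x := hΦ' ▸ integral_Iic_pos hφint hφpos x
  have hUpos (θ : ℝ) : 0 < U θ := by
    rw [hU]
    exact Finset.sum_pos (fun i _ => mul_pos (div_pos (hφpos _) (hΦpos _)) (hy i))
      Finset.univ_nonempty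
  have hℓmono : StrictMono ℓ := by
    rw [funext hℓ]
    exact strictMono_sum_log_mul (hΦ' ▸ strictMono_integral_Iic hφint hφpos) hΦpos
      (fun i => mul_pos two_pos (hφpos (y i))) hy
  exact ⟨hUpos, hℓmono, fun θ => (hUpos θ).ne', hℓmono.not_exists_forall_apply_le⟩
end

section
/- Fix k > 0 and λ > 0, and let γ be the gamma distribution with shape k and rate λ. Then Cov(Y, log Y) = ∫ y·log y dγ − (∫ y dγ)·(∫ log y dγ) = 1/λ = Var(Y)/E(Y). Consequently, for the gamma distribution with mean μ and precision φ (shape φ, rate φ/μ), the parameters μ and φ are orthogonal: E[U_μ·U_φ] = ∫ (φ/μ²)(y−μ)·(−ψ(φ) + 1 + log(μ/φ) + log y − y/μ) dγ(y) = 0. -/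
open MeasureTheory ProbabilityTheory Real

open Set Filter Topology

/-!
Differentiating `t ^ k * log t * exp (-λ t)` and integrating over `(0, ∞)`, where the boundary
terms vanish, gives the Stein-type identity `λ E[Y log Y] = k E[log Y] + 1` for `Y ~ Γ(k, λ)`.
Since `E[Y] = k/λ`, this is `Cov(Y, log Y) = 1/λ`, while the moments `E[Y^s] = Γ(k+s)/(Γ(k) λ^s)`
give `Var(Y) = k/λ²`. For the score product, `E[(Y - μ)(c + log Y - Y/μ)]` equals
`Cov(Y, log Y) - Var(Y)/μ` for every constant `c`, which vanishes when `k = φ`, `λ = φ/μ`.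
-/

lemma abs_log_le_rpow_add_rpow_neg_div {ε t : ℝ} (hε : 0 < ε) (ht : 0 < t) :
    |log t| ≤ (t ^ ε + t ^ (-ε)) / ε := by
  have hpos : 0 < t ^ ε := rpow_pos_of_pos ht ε
  have hneg : 0 < t ^ (-ε) := rpow_pos_of_pos ht (-ε)
  rcases le_total 1 t with h | h
  · rw [abs_of_nonneg (log_nonneg h)]
    calc log t ≤ t ^ ε / ε := log_le_rpow_div ht.le hε
      _ ≤ _ := by gcongr; linarith
  · rw [abs_of_nonpos (log_nonpos ht.le h), ← log_inv]
    calc log t⁻¹ ≤ t⁻¹ ^ ε / ε := log_le_rpow_div (inv_nonneg.2 ht.le) hε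
      _ = t ^ (-ε) / ε := by rw [inv_rpow ht.le, rpow_neg ht.le]
      _ ≤ _ := by gcongr; linarith

lemma rpow_sub_one_mul_rpow {y : ℝ} (hy : 0 < y) (k s : ℝ) :
    y ^ (k - 1) * y ^ s = y ^ (k + s - 1) := by
  rw [← rpow_add hy]
  ring_nf

lemma integrableOn_rpow_mul_exp_neg_mul {a l : ℝ} (ha : -1 < a) (hl : 0 < l) :
    IntegrableOn (fun t => t ^ a * exp (-(l * t))) (Ioi 0) := by
  simpa [rpow_one, neg_mul] using integrableOn_rpow_mul_exp_neg_mul_rpow ha zero_lt_one hl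

lemma integrableOn_rpow_mul_log_mul_exp_neg_mul {a l : ℝ} (ha : -1 < a) (hl : 0 < l) :
    IntegrableOn (fun t => t ^ a * log t * exp (-(l * t))) (Ioi 0) := by
  set ε := (a + 1) / 2
  have hε : 0 < ε := by simp only [ε]; linarith
  have hdom := ((integrableOn_rpow_mul_exp_neg_mul (a := a + ε) (by linarith) hl).add
    (integrableOn_rpow_mul_exp_neg_mul (a := a - ε) (by simp only [ε]; linarith) hl)).div_const ε
  refine hdom.mono' (by fun_prop) ((ae_restrict_iff' measurableSet_Ioi).2 (ae_of_all _ ?_))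
  intro t (ht : 0 < t)
  rw [norm_mul, norm_mul, norm_of_nonneg (rpow_pos_of_pos ht a).le,
    norm_of_nonneg (exp_pos _).le, norm_eq_abs]
  calc t ^ a * |log t| * exp (-(l * t))
      ≤ t ^ a * ((t ^ ε + t ^ (-ε)) / ε) * exp (-(l * t)) := by
        gcongr; exact abs_log_le_rpow_add_rpow_neg_div hε ht
    _ = _ := by
        simp only [Pi.add_apply]
        rw [rpow_add ht, rpow_sub ht, rpow_neg ht.le]
        ring

lemma tendsto_rpow_mul_log_mul_exp_neg_mul_nhdsGT_zero {k : ℝ} (hk : 0 < k) (l : ℝ) :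
    Tendsto (fun t => t ^ k * log t * exp (-(l * t))) (𝓝[>] 0) (𝓝 0) := by
  have hexp : Tendsto (fun t : ℝ => exp (-(l * t))) (𝓝[>] 0) (𝓝 1) := by
    simpa using ((continuous_const.mul continuous_id).neg.rexp.tendsto 0).mono_left
      nhdsWithin_le_nhds
  simpa [mul_comm (log _)] using (tendsto_log_mul_rpow_nhdsGT_zero hk).mul hexp

lemma tendsto_rpow_mul_log_mul_exp_neg_mul_atTop (k : ℝ) {l : ℝ} (hl : 0 < l) :
    Tendsto (fun t => t ^ k * log t * exp (-(l * t))) atTop (𝓝 0) := by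
  refine squeeze_zero_norm' ?_ (by simpa [neg_mul] using
    tendsto_rpow_mul_exp_neg_mul_atTop_nhds_zero (k + 1) l hl)
  filter_upwards [eventually_ge_atTop 1] with t ht
  have ht0 : 0 < t := by linarith
  rw [norm_mul, norm_mul, norm_of_nonneg (rpow_pos_of_pos ht0 k).le,
    norm_of_nonneg (exp_pos _).le, norm_of_nonneg (log_nonneg ht), rpow_add_one ht0.ne']
  gcongr
  linarith [log_le_sub_one_of_pos ht0]

lemma integral_rpow_mul_log_mul_exp_neg_mul_Ioi {k l : ℝ} (hk : 0 < k) (hl : 0 < l) :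
    l * ∫ t in Ioi 0, t ^ k * log t * exp (-(l * t)) =
      k * (∫ t in Ioi 0, t ^ (k - 1) * log t * exp (-(l * t))) + (1 / l) ^ k * Gamma k := by
  set F : ℝ → ℝ := fun t => t ^ k * log t * exp (-(l * t))
  have hderiv : ∀ t ∈ Ioi (0 : ℝ), HasDerivAt F
      (k * (t ^ (k - 1) * log t * exp (-(l * t))) - l * (t ^ k * log t * exp (-(l * t)))
        + t ^ (k - 1) * exp (-(l * t))) t := by
    intro t (ht : 0 < t)
    have h := (((hasDerivAt_rpow_const (p := k) (Or.inl ht.ne')).mul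
      (hasDerivAt_log ht.ne')).mul (((hasDerivAt_id t).const_mul l).neg.exp))
    refine h.congr_deriv ?_
    simp only [Pi.mul_apply, Pi.neg_apply, id]
    rw [rpow_sub_one ht.ne']
    field_simp
    ring
  have hint_log (a : ℝ) (ha : -1 < a) := integrableOn_rpow_mul_log_mul_exp_neg_mul ha hl
  have hint (a : ℝ) (ha : -1 < a) := integrableOn_rpow_mul_exp_neg_mul ha hl
  have hcont : ContinuousWithinAt F (Ici 0) 0 :=
    continuousWithinAt_Ioi_iff_Ici.1 (by
      simpa [ContinuousWithinAt, F] using tendsto_rpow_mul_log_mul_exp_neg_mul_nhdsGT_zero hk l)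
  have hftc := integral_Ioi_of_hasDerivAt_of_tendsto hcont hderiv
    ((((hint_log _ (by linarith)).const_mul k).sub ((hint_log _ (by linarith)).const_mul l)).add
      (hint _ (by linarith))) (tendsto_rpow_mul_log_mul_exp_neg_mul_atTop k hl)
  rw [integral_add, integral_sub, integral_const_mul, integral_const_mul,
    integral_rpow_mul_exp_neg_mul_Ioi hk hl] at hftc
  · simp only [F, log_zero, mul_zero, zero_mul, zero_sub] at hftc ⊢
    linarith
  all_goals first
    | exact ((hint_log _ (by linarith)).const_mul _).sub ((hint_log _ (by linarith)).const_mul _)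
    | exact (hint_log _ (by linarith)).const_mul _
    | exact hint _ (by linarith)

section GammaMeasure

variable {k l : ℝ}

lemma toReal_gammaPDF (hk : 0 < k) (hl : 0 < l) (y : ℝ) :
    (gammaPDF k l y).toReal = gammaPDFReal k l y :=
  ENNReal.toReal_ofReal (gammaPDFReal_nonneg hk hl y)

lemma gammaPDFReal_mul_eq_indicator (f : ℝ → ℝ) :
    (fun y => gammaPDFReal k l y * f y) =
      (Ici 0).indicator (fun y => l ^ k / Gamma k * (y ^ (k - 1) * exp (-(l * y)) * f y)) := by
  ext y
  by_cases hy : 0 ≤ y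
  · simp only [gammaPDFReal, if_pos hy, indicator_of_mem (mem_Ici.2 hy)]
    ring
  · simp [gammaPDFReal, hy]

lemma measurable_gammaPDF : Measurable (gammaPDF k l) :=
  (measurable_gammaPDFReal k l).ennreal_ofReal

lemma integral_gammaMeasure (hk : 0 < k) (hl : 0 < l) (f : ℝ → ℝ) :
    ∫ y, f y ∂gammaMeasure k l =
      l ^ k / Gamma k * ∫ y in Ioi 0, y ^ (k - 1) * exp (-(l * y)) * f y := by
  rw [gammaMeasure, integral_withDensity_eq_integral_toReal_smul
    measurable_gammaPDF (ae_of_all _ fun _ => ENNReal.ofReal_lt_top)]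
  simp only [toReal_gammaPDF hk hl, smul_eq_mul]
  rw [gammaPDFReal_mul_eq_indicator, integral_indicator measurableSet_Ici,
    integral_Ici_eq_integral_Ioi, integral_const_mul]

lemma integrable_gammaMeasure_of_integrableOn (hk : 0 < k) (hl : 0 < l) {f : ℝ → ℝ}
    (hf : IntegrableOn (fun y => y ^ (k - 1) * exp (-(l * y)) * f y) (Ioi 0)) :
    Integrable f (gammaMeasure k l) := by
  rw [gammaMeasure, integrable_withDensity_iff measurable_gammaPDF
    (ae_of_all _ fun _ => ENNReal.ofReal_lt_top)]
  simp only [toReal_gammaPDF hk hl, mul_comm (f _)]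
  rw [gammaPDFReal_mul_eq_indicator, integrable_indicator_iff measurableSet_Ici,
    integrableOn_Ici_iff_integrableOn_Ioi]
  exact hf.const_mul _

lemma integrable_rpow_gammaMeasure (hk : 0 < k) (hl : 0 < l) {s : ℝ} (hs : 0 < k + s) :
    Integrable (fun y => y ^ s) (gammaMeasure k l) := by
  refine integrable_gammaMeasure_of_integrableOn hk hl
    ((integrableOn_rpow_mul_exp_neg_mul (a := k + s - 1) (by linarith) hl).congr_fun
      (fun y (hy : 0 < y) => ?_) measurableSet_Ioi)
  dsimp only
  rw [← rpow_sub_one_mul_rpow hy]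
  ring

lemma integrable_rpow_mul_log_gammaMeasure (hk : 0 < k) (hl : 0 < l) {s : ℝ} (hs : 0 < k + s) :
    Integrable (fun y => y ^ s * log y) (gammaMeasure k l) := by
  refine integrable_gammaMeasure_of_integrableOn hk hl
    ((integrableOn_rpow_mul_log_mul_exp_neg_mul (a := k + s - 1) (by linarith) hl).congr_fun
      (fun y (hy : 0 < y) => ?_) measurableSet_Ioi)
  dsimp only
  rw [← rpow_sub_one_mul_rpow hy]
  ring

lemma integral_rpow_gammaMeasure (hk : 0 < k) (hl : 0 < l) {s : ℝ} (hs : 0 < k + s) :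
    ∫ y, y ^ s ∂gammaMeasure k l = Gamma (k + s) / (Gamma k * l ^ s) := by
  have hΓ := (Gamma_pos_of_pos hk).ne'
  rw [integral_gammaMeasure hk hl, setIntegral_congr_fun measurableSet_Ioi
      (g := fun y => y ^ (k + s - 1) * exp (-(l * y))) (fun y (hy : 0 < y) => by
        dsimp only
        rw [← rpow_sub_one_mul_rpow hy]
        ring),
    integral_rpow_mul_exp_neg_mul_Ioi hs hl, one_div, inv_rpow hl.le, rpow_add hl]
  field_simp

lemma integral_id_gammaMeasure (hk : 0 < k) (hl : 0 < l) :
    ∫ y, y ∂gammaMeasure k l = k / l := by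
  have h := integral_rpow_gammaMeasure hk hl (s := 1) (by linarith)
  simp only [rpow_one, Gamma_add_one hk.ne'] at h
  rw [h]
  field_simp [(Gamma_pos_of_pos hk).ne']

lemma integral_sq_gammaMeasure (hk : 0 < k) (hl : 0 < l) :
    ∫ y, y ^ 2 ∂gammaMeasure k l = k * (k + 1) / l ^ 2 := by
  have h := integral_rpow_gammaMeasure hk hl (s := 2) (by linarith)
  rw [show k + 2 = (k + 1) + 1 by ring, Gamma_add_one (by linarith), Gamma_add_one hk.ne'] at h
  simp only [rpow_two] at h
  rw [h]
  field_simp [(Gamma_pos_of_pos hk).ne']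

lemma mul_integral_mul_log_gammaMeasure (hk : 0 < k) (hl : 0 < l) :
    l * ∫ y, y * log y ∂gammaMeasure k l = k * (∫ y, log y ∂gammaMeasure k l) + 1 := by
  have hnorm : l ^ k / Gamma k * ((1 / l) ^ k * Gamma k) = 1 := by
    rw [one_div, inv_rpow hl.le]
    field_simp [(Gamma_pos_of_pos hk).ne']
  rw [integral_gammaMeasure hk hl, integral_gammaMeasure hk hl,
    setIntegral_congr_fun measurableSet_Ioi
      (g := fun y => y ^ k * log y * exp (-(l * y))) (fun y (hy : 0 < y) => by
        rw [rpow_sub_one hy.ne']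
        field_simp)]
  simp only [mul_right_comm _ (exp _) (log _)]
  linear_combination (l ^ k / Gamma k) * integral_rpow_mul_log_mul_exp_neg_mul_Ioi hk hl + hnorm

lemma integral_gammaMeasure_linear_comb (hk : 0 < k) (hl : 0 < l) (a b c d e : ℝ) :
    ∫ y, a + b * y + c * y ^ 2 + d * log y + e * (y * log y) ∂gammaMeasure k l =
      a + b * (∫ y, y ∂gammaMeasure k l) + c * (∫ y, y ^ 2 ∂gammaMeasure k l)
        + d * (∫ y, log y ∂gammaMeasure k l) + e * ∫ y, y * log y ∂gammaMeasure k l := by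
  have := isProbabilityMeasure_gammaMeasure hk hl
  have h1 : Integrable (fun y => y) (gammaMeasure k l) := by
    simpa using integrable_rpow_gammaMeasure hk hl (s := 1) (by linarith)
  have h2 : Integrable (fun y => y ^ 2) (gammaMeasure k l) := by
    simpa using integrable_rpow_gammaMeasure hk hl (s := 2) (by linarith)
  have h3 : Integrable log (gammaMeasure k l) := by
    simpa using integrable_rpow_mul_log_gammaMeasure hk hl (s := 0) (by linarith)
  have h4 : Integrable (fun y => y * log y) (gammaMeasure k l) := by
    simpa using integrable_rpow_mul_log_gammaMeasure hk hl (s := 1) (by linarith)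
  rw [integral_add, integral_add, integral_add, integral_add, integral_const,
    integral_const_mul, integral_const_mul, integral_const_mul, integral_const_mul]
  · simp
  all_goals apply_rules [Integrable.add, Integrable.const_mul, integrable_const]

end GammaMeasure

lemma integral_sub_mean_sq_gammaMeasure {k l : ℝ} (hk : 0 < k) (hl : 0 < l) :
    ∫ y, (y - k / l) ^ 2 ∂gammaMeasure k l = k / l ^ 2 := by
  have h := integral_gammaMeasure_linear_comb hk hl ((k / l) ^ 2) (-2 * (k / l)) 1 0 0
  simp only [integral_id_gammaMeasure hk hl, integral_sq_gammaMeasure hk hl] at h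
  rw [show (fun y => (y - k / l) ^ 2) =
      fun y => (k / l) ^ 2 + -2 * (k / l) * y + 1 * y ^ 2 + 0 * log y + 0 * (y * log y) by
    ext y; ring, h]
  field_simp
  ring

lemma integral_sub_mul_gammaMeasure_eq_zero {m p : ℝ} (hm : 0 < m) (hp : 0 < p) (c : ℝ) :
    ∫ y, (y - m) * (c + log y - y / m) ∂gammaMeasure p (p / m) = 0 := by
  have hl : 0 < p / m := div_pos hp hm
  have h := integral_gammaMeasure_linear_comb hp hl (-m * c) (c + 1) (-1 / m) (-m) 1
  have hstein := mul_integral_mul_log_gammaMeasure hp hl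
  simp only [integral_id_gammaMeasure hp hl, integral_sq_gammaMeasure hp hl] at h
  rw [show (fun y => (y - m) * (c + log y - y / m)) =
      fun y => -m * c + (c + 1) * y + -1 / m * y ^ 2 + -m * log y + 1 * (y * log y) by
    ext y; field_simp; ring, h]
  field_simp at hstein ⊢
  linear_combination hstein

theorem gamma_orthogonality_general
    (ψ : ℝ → ℝ) :
    (∀ k l : ℝ, 0 < k → 0 < l →
      (∫ y, y * Real.log y ∂(gammaMeasure k l))
          - (∫ y, y ∂(gammaMeasure k l)) * (∫ y, Real.log y ∂(gammaMeasure k l))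
        = 1 / l ∧
      (1 : ℝ) / l =
        (∫ y, (y - ∫ z, z ∂(gammaMeasure k l)) ^ 2 ∂(gammaMeasure k l))
          / (∫ y, y ∂(gammaMeasure k l))) ∧
    (∀ m p : ℝ, 0 < m → 0 < p →
      (∫ y, ((p / m ^ 2) * (y - m))
            * (-ψ p + 1 + Real.log (m / p) + Real.log y - y / m)
          ∂(gammaMeasure p (p / m))) = 0) := by
  refine ⟨fun k l hk hl => ⟨?_, ?_⟩, fun m p hm hp => ?_⟩
  · rw [integral_id_gammaMeasure hk hl]
    field_simp
    linear_combination mul_integral_mul_log_gammaMeasure hk hl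
  · rw [integral_id_gammaMeasure hk hl, integral_sub_mean_sq_gammaMeasure hk hl]
    field_simp
  · simp_rw [mul_assoc]
    rw [integral_const_mul, integral_sub_mul_gammaMeasure_eq_zero hm hp, mul_zero]

/-- For the gamma distribution with shape `k` and rate `λ`,
`Cov(Y, log Y) = 1/λ = Var(Y)/E(Y)`. Consequently, for the gamma distribution with
mean `μ` and precision `φ` (shape `φ`, rate `φ/μ`), the parameters `μ` and `φ` are
orthogonal: the expectation of the product of the two scores vanishes. -/
theorem gamma_orthogonality
    (ψ : ℝ → ℝ) (hψ : ∀ x, ψ x = deriv (fun s => Real.log (Real.Gamma s)) x) :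
    (∀ k l : ℝ, 0 < k → 0 < l →
      (∫ y, y * Real.log y ∂(gammaMeasure k l))
          - (∫ y, y ∂(gammaMeasure k l)) * (∫ y, Real.log y ∂(gammaMeasure k l))
        = 1 / l ∧
      (1 : ℝ) / l =
        (∫ y, (y - ∫ z, z ∂(gammaMeasure k l)) ^ 2 ∂(gammaMeasure k l))
          / (∫ y, y ∂(gammaMeasure k l))) ∧
    (∀ m p : ℝ, 0 < m → 0 < p →
      (∫ y, ((p / m ^ 2) * (y - m))
            * (-ψ p + 1 + Real.log (m / p) + Real.log y - y / m)
          ∂(gammaMeasure p (p / m))) = 0) :=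
  gamma_orthogonality_general ψ
end
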